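/- The language L_lin = { a^n b^n : n ≥ 1 } over the alphabet {a,b} is accepted by a repetitive nondeterministic finite automaton with translucent words (RNFAwtw). -/

import Mathlib

/-! Repetitive (non)deterministic finite automata with translucent words. -/

/-- Behavior of the automaton at the end-of-tape marker: halt accepting,
halt rejecting, or (in the repetitive case) continue in one of a set of states. -/
inductive EndBehavior (Q : Type) : Type where
  | accept : EndBehavior Q
  | reject : EndBehavior Q
  | cont : Set Q → EndBehavior Q

/-- `InStar S w` means `w` belongs to the Kleene star `S*` of the set of words `S`. -/
def InStar {α : Type} (S : Set (List α)) (w : List α) : Prop :=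
  ∃ l : List (List α), (∀ u ∈ l, u ∈ S) ∧ l.flatten = w

/-- A (repetitive) nondeterministic finite automaton with translucent words,
with state set `Q` over the alphabet `α`.  `tl q` is the set `τ(q)` of
translucent words of the state `q`, `delta` is the transition function and
`endB q` is the behavior at the end-of-tape marker.  The fields `tl_fin`,
`code_ne`, `prefix_code` and `tl_head` express that each `τ(q)` is finite,
that `τ(q) ∪ Σ_q` is a prefix code (no empty word, and no member is a proper
prefix of another member), and that no word of `τ(q)` begins with a letter
readable in `q`. -/
structure RNFAwtw (α : Type) (Q : Type) : Type where
  init : Set Q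
  tl : Q → Set (List α)
  delta : Q → α → Set Q
  endB : Q → EndBehavior Q
  tl_fin : ∀ q, (tl q).Finite
  code_ne : ∀ q, [] ∉ tl q
  prefix_code : ∀ q,
    ∀ u ∈ tl q ∪ {w | ∃ a, (delta q a).Nonempty ∧ w = [a]},
    ∀ v ∈ tl q ∪ {w | ∃ a, (delta q a).Nonempty ∧ w = [a]},
      u <+: v → u = v
  tl_head : ∀ q, ∀ t ∈ tl q, ∀ a, (delta q a).Nonempty → ¬ [a] <+: t

/-- Configurations: a pair of a state and the remaining tape content, or one
of the two halting configurations. -/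
inductive Conf (α Q : Type) : Type where
  | state : Q → List α → Conf α Q
  | accept : Conf α Q
  | reject : Conf α Q

/-- The single-step computation relation of an RNFAwtw. -/
inductive RNFAwtw.Step {α Q : Type} (A : RNFAwtw α Q) :
    Conf α Q → Conf α Q → Prop where
  | read {q q' : Q} {a : α} {u v : List α} :
      InStar (A.tl q) u → q' ∈ A.delta q a →
      RNFAwtw.Step A (Conf.state q (u ++ a :: v)) (Conf.state q' (u ++ v))
  | stuck {q : Q} {a : α} {u v : List α} :
      InStar (A.tl q) u → A.delta q a = ∅ →
      (∀ t ∈ A.tl q, ¬ t <+: (a :: v)) →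
      RNFAwtw.Step A (Conf.state q (u ++ a :: v)) Conf.reject
  | haltAccept {q : Q} {w : List α} :
      InStar (A.tl q) w → A.endB q = EndBehavior.accept →
      RNFAwtw.Step A (Conf.state q w) Conf.accept
  | haltReject {q : Q} {w : List α} :
      InStar (A.tl q) w → A.endB q = EndBehavior.reject →
      RNFAwtw.Step A (Conf.state q w) Conf.reject
  | goOn {q q' : Q} {w : List α} {S : Set Q} :
      InStar (A.tl q) w → A.endB q = EndBehavior.cont S → q' ∈ S →
      RNFAwtw.Step A (Conf.state q w) (Conf.state q' w)

/-- `A` accepts the word `w`. -/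
def RNFAwtw.Accepts {α Q : Type} (A : RNFAwtw α Q) (w : List α) : Prop :=
  ∃ q0 ∈ A.init, Relation.ReflTransGen A.Step (Conf.state q0 w) Conf.accept

/-- The language accepted by `A`. -/
def RNFAwtw.lang {α Q : Type} (A : RNFAwtw α Q) : Set (List α) :=
  { w | A.Accepts w }

/-- `A` is deterministic: one initial state, at most one transition per
state/letter pair, and at the end-of-tape marker the continuation (if any)
is a single state. -/
def RNFAwtw.Deterministic {α Q : Type} (A : RNFAwtw α Q) : Prop :=
  (∃ q0, A.init = {q0}) ∧
  (∀ q a, (A.delta q a).Subsingleton) ∧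
  (∀ q S, A.endB q = EndBehavior.cont S → ∃ q', S = {q'})

/-- `A` is non-repetitive: at the end-of-tape marker it always halts. -/
def RNFAwtw.NonRepetitive {α Q : Type} (A : RNFAwtw α Q) : Prop :=
  ∀ q S, A.endB q ≠ EndBehavior.cont S

/-- `L` is accepted by some repetitive NFAwtw (with a finite state set). -/
def AcceptedByRNFAwtw {α : Type} (L : Set (List α)) : Prop :=
  ∃ (Q : Type) (_ : Finite Q) (A : RNFAwtw α Q), A.lang = L

/-- `L` is accepted by some repetitive DFAwtw. -/
def AcceptedByRDFAwtw {α : Type} (L : Set (List α)) : Prop :=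
  ∃ (Q : Type) (_ : Finite Q) (A : RNFAwtw α Q), A.Deterministic ∧ A.lang = L

/-- `L` is accepted by some (non-repetitive) NFAwtw. -/
def AcceptedByNFAwtw {α : Type} (L : Set (List α)) : Prop :=
  ∃ (Q : Type) (_ : Finite Q) (A : RNFAwtw α Q), A.NonRepetitive ∧ A.lang = L

/-- `L` is accepted by some (non-repetitive) DFAwtw. -/
def AcceptedByDFAwtw {α : Type} (L : Set (List α)) : Prop :=
  ∃ (Q : Type) (_ : Finite Q) (A : RNFAwtw α Q),
    A.NonRepetitive ∧ A.Deterministic ∧ A.lang = L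

/-- The two-letter alphabet `{a, b}`. -/
inductive Letter : Type where
  | a : Letter
  | b : Letter
deriving DecidableEq

instance : Fintype Letter :=
  ⟨{Letter.a, Letter.b}, fun x => by cases x <;> simp⟩

/-- `L_lin = { a^n b^n : n ≥ 1 }`. -/
def Llin : Set (List Letter) :=
  { w | ∃ n : ℕ, 1 ≤ n ∧
      w = List.replicate n Letter.a ++ List.replicate n Letter.b }

/-! The automaton erases the first `a` and then the first `b` of the tape, round after round,
until only `ab` is left, which a separate branch reads off directly. Since `a` is translucent
for the `b`-eraser, the erased `b` is the first one, but nothing yet forces it to be followed by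
the `b`-block rather than by further `a`s. This is what the repetitive step before each round
checks: the tape must factor over `{aa, abbb, bb}`, which holds for `a^n b^n` with `n ≥ 2` but
never when a lone `b` stands before an `a`.

Soundness is proved backwards: a predicate on states and tapes that holds wherever the automaton
halts accepting and is preserved by every step taken in reverse holds at every configuration from
which acceptance is reachable. -/

namespace InStar

variable {α : Type} {S : Set (List α)} {u v w : List α}

theorem nil (S : Set (List α)) : InStar S [] := ⟨[], by simp, rfl⟩

theorem append (hu : InStar S u) (hv : InStar S v) : InStar S (u ++ v) := by
  obtain ⟨l, hl, rfl⟩ := hu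
  obtain ⟨l', hl', rfl⟩ := hv
  exact ⟨l ++ l', by simpa using fun t ht => ht.elim (hl t) (hl' t), by simp⟩

theorem flatten_replicate {t : List α} (ht : t ∈ S) (n : ℕ) :
    InStar S (List.replicate n t).flatten :=
  ⟨_, fun _ hu => (List.eq_of_mem_replicate hu) ▸ ht, rfl⟩

theorem replicate {x : α} (hx : [x] ∈ S) (n : ℕ) : InStar S (List.replicate n x) := by
  simpa using flatten_replicate hx n

theorem eq_nil_or_append (h : InStar S w) :
    w = [] ∨ ∃ t ∈ S, ∃ r, w = t ++ r ∧ InStar S r := by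
  obtain ⟨_ | ⟨t, l⟩, hl, rfl⟩ := h
  · exact Or.inl rfl
  · exact Or.inr ⟨t, hl t (by simp), _, rfl, l, fun u hu => hl u (by simp [hu]), rfl⟩

theorem eq_nil_of_empty (h : InStar ∅ w) : w = [] := by
  obtain h | ⟨t, ht, -⟩ := h.eq_nil_or_append
  exacts [h, ht.elim]

theorem eq_replicate_of_singleton {x : α} (h : InStar {[x]} w) :
    w = List.replicate w.length x := by
  obtain ⟨l, hl, rfl⟩ := h
  refine List.eq_replicate_iff.2 ⟨rfl, fun y hy => ?_⟩
  obtain ⟨t, ht, hy⟩ := List.mem_flatten.1 hy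
  rw [hl t ht] at hy
  exact List.eq_of_mem_singleton hy

end InStar

def Conf.Holds {α Q : Type} (P : Q → List α → Prop) : Conf α Q → Prop
  | .state q w => P q w
  | .accept => True
  | .reject => False

namespace RNFAwtw

variable {α Q : Type}

structure BackwardInvariant (A : RNFAwtw α Q) (P : Q → List α → Prop) : Prop where
  read : ∀ {q q' : Q} {x : α} {u v : List α},
    InStar (A.tl q) u → q' ∈ A.delta q x → P q' (u ++ v) → P q (u ++ x :: v)
  goOn : ∀ {q q' : Q} {w : List α} {S : Set Q},
    InStar (A.tl q) w → A.endB q = .cont S → q' ∈ S → P q' w → P q w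
  accept : ∀ {q : Q} {w : List α}, InStar (A.tl q) w → A.endB q = .accept → P q w

variable {A : RNFAwtw α Q} {P : Q → List α → Prop}

theorem BackwardInvariant.holds (hP : A.BackwardInvariant P) {c : Conf α Q}
    (h : Relation.ReflTransGen A.Step c .accept) : c.Holds P := by
  induction h using Relation.ReflTransGen.head_induction_on with
  | refl => trivial
  | head step _ ih =>
    cases step with
    | read hu hq' => exact hP.read hu hq' ih
    | stuck => exact ih.elim
    | haltAccept hw he => exact hP.accept hw he
    | haltReject => exact ih.elim
    | goOn hw he hq' => exact hP.goOn hw he hq' ih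

theorem BackwardInvariant.lang_subset (hP : A.BackwardInvariant P) {L : Set (List α)}
    (hL : ∀ q ∈ A.init, ∀ w, P q w → w ∈ L) : A.lang ⊆ L :=
  fun _ ⟨q, hq, h⟩ => hL q hq _ (hP.holds h)

theorem Step.readFirst {q q' : Q} {x : α} {v : List α} (h : q' ∈ A.delta q x) :
    A.Step (.state q (x :: v)) (.state q' v) :=
  Step.read (u := []) (InStar.nil _) h

end RNFAwtw

theorem List.replicate_append_eq_replicate_append_replicate {α : Type} {x y : α} (hxy : x ≠ y)
    {l n m : ℕ} {v : List α}
    (h : List.replicate l x ++ v = List.replicate n x ++ List.replicate m y) :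
    l ≤ n ∧ v = List.replicate (n - l) x ++ List.replicate m y := by
  induction l generalizing n with
  | zero => simpa using h
  | succ l ih =>
    cases n with
    | zero =>
      cases m with
      | zero => simp at h
      | succ m => exact absurd (List.cons.inj h).1 hxy
    | succ n =>
      obtain ⟨hle, hv⟩ := ih (List.cons.inj h).2
      exact ⟨by omega, by simpa using hv⟩

theorem Letter.exists_iff {p : Letter → Prop} : (∃ x, p x) ↔ p .a ∨ p .b :=
  ⟨fun ⟨x, hx⟩ => by cases x <;> simp [hx], fun h => h.elim (⟨_, ·⟩) (⟨_, ·⟩)⟩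

namespace Llin

open Letter
open List (replicate)

def checkWords : Set (List Letter) := {[a, a], [a, b, b, b], [b, b]}

inductive State : Type where
  | check | eraseA | eraseB | lastA | lastB | done
deriving DecidableEq

instance : Fintype State :=
  ⟨{.check, .eraseA, .eraseB, .lastA, .lastB, .done}, fun q => by cases q <;> simp⟩

open State

def tl : State → Set (List Letter)
  | check => checkWords
  | eraseB => {[a]}
  | _ => ∅

def delta : State → Letter → Set State
  | eraseA, a => {eraseB}
  | eraseB, b => {check, lastA}
  | lastA, a => {lastB}
  | lastB, b => {done}
  | _, _ => ∅

def endB : State → EndBehavior State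
  | check => .cont {eraseA}
  | done => .accept
  | _ => .reject

def automaton : RNFAwtw Letter State where
  init := {check, lastA}
  tl := tl
  delta := delta
  endB := endB
  tl_fin q := by cases q <;> simp [tl, checkWords, Set.toFinite]
  code_ne q := by cases q <;> simp [tl, checkWords]
  prefix_code q u hu v hv huv := by
    cases q <;> simp [tl, delta, checkWords, Letter.exists_iff] at hu hv <;>
      rcases hu with rfl | rfl | rfl <;> rcases hv with rfl | rfl | rfl
    all_goals revert huv; decide
  tl_head q t ht x hx := by
    cases q <;> cases x <;> simp only [tl, checkWords, delta, Set.mem_empty_iff_false,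
      Set.mem_insert_iff, Set.mem_singleton_iff, Set.not_nonempty_empty] at ht hx
    subst ht
    decide

theorem not_inStar_checkWords (v : List Letter) :
    ∀ l, ¬ InStar checkWords (replicate l a ++ b :: a :: v)
  | l, h => by
    obtain h | ⟨t, ht, r, hw, hr⟩ := h.eq_nil_or_append
    · simp at h
    simp only [checkWords, Set.mem_insert_iff, Set.mem_singleton_iff] at ht
    rcases ht with rfl | rfl | rfl
    · match l with
      | 0 | 1 => simp at hw
      | l + 2 =>
        simp only [List.replicate_succ, List.cons_append, List.cons.injEq, true_and] at hw
        exact not_inStar_checkWords v l (hw ▸ hr)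
    all_goals rcases l with _ | _ | l <;> simp [List.replicate_succ] at hw

theorem inStar_checkWords {n : ℕ} (hn : 2 ≤ n) :
    InStar checkWords (replicate n a ++ replicate n b) := by
  have haa : replicate 2 a ∈ checkWords := by simp [checkWords]
  have hbb : replicate 2 b ∈ checkWords := by simp [checkWords]
  obtain ⟨k, rfl | rfl⟩ := Nat.even_or_odd' n
  · have := (InStar.flatten_replicate haa k).append (InStar.flatten_replicate hbb k)
    rwa [List.flatten_replicate_replicate, List.flatten_replicate_replicate, mul_comm] at this
  · obtain ⟨j, rfl⟩ : ∃ j, k = j + 1 := ⟨k - 1, by omega⟩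
    have habbb : [a, b, b, b] ∈ checkWords := by simp [checkWords]
    have := (InStar.flatten_replicate haa (j + 1)).append
      ((InStar.flatten_replicate habbb 1).append (InStar.flatten_replicate hbb j))
    rw [List.flatten_replicate_replicate, List.flatten_replicate_replicate] at this
    convert this using 1
    rw [show 2 * (j + 1) + 1 = (j + 1) * 2 + 1 by ring, List.replicate_add,
      show (j + 1) * 2 + 1 = 3 + j * 2 by ring, List.replicate_add]
    simp

def bInserted : Set (List Letter) :=
  {w | ∃ l k, 1 ≤ l + k ∧ w = replicate l a ++ b :: (replicate k a ++ replicate (l + k) b)}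

theorem mem_bInserted {u v : List Letter} (hu : InStar {[a]} u) (h : u ++ v ∈ Llin) :
    u ++ b :: v ∈ bInserted := by
  obtain ⟨n, hn, huv⟩ := h
  rw [hu.eq_replicate_of_singleton] at huv ⊢
  obtain ⟨hle, rfl⟩ :=
    List.replicate_append_eq_replicate_append_replicate (by decide : a ≠ b) huv
  exact ⟨u.length, n - u.length, by omega, by rw [Nat.add_sub_cancel' hle]⟩

theorem mem_Llin_of_inStar_checkWords {w : List Letter} (hw : InStar checkWords (a :: w))
    (h : w ∈ bInserted) : a :: w ∈ Llin := by
  obtain ⟨l, _ | k, -, rfl⟩ := h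
  · exact ⟨l + 1, by omega, by simp [List.replicate_succ]⟩
  · exact absurd hw (by simpa [List.replicate_succ] using not_inStar_checkWords _ (l + 1))

def tapeInvariant : State → List Letter → Prop
  | check, w | lastA, w => w ∈ Llin
  | eraseA, w => ∃ w' ∈ bInserted, w = a :: w'
  | eraseB, w => w ∈ bInserted
  | lastB, w => w = [b]
  | done, w => w = []

theorem backwardInvariant_tapeInvariant : automaton.BackwardInvariant tapeInvariant where
  read {q q' x u v} hu hq' h := by
    cases q <;> cases x <;> simp only [automaton, delta, Set.mem_empty_iff_false] at hq'
    case eraseB.b =>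
      obtain rfl | rfl := hq' <;> exact mem_bInserted hu h
    all_goals
      obtain rfl := InStar.eq_nil_of_empty hu
      subst hq'
    case eraseA.a => exact ⟨v, h, rfl⟩
    case lastA.a => exact ⟨1, le_rfl, by simp_all [tapeInvariant]⟩
    case lastB.b => simp_all [tapeInvariant]
  goOn {q q' w S} hw hS hq' h := by
    cases q <;> simp only [automaton, endB, reduceCtorEq] at hS
    cases hS
    obtain ⟨w', hw', rfl⟩ := (hq' : q' = eraseA) ▸ h
    exact mem_Llin_of_inStar_checkWords hw hw'
  accept {q w} hw he := by
    cases q <;> simp only [automaton, endB, reduceCtorEq] at he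
    exact InStar.eq_nil_of_empty hw

open Relation (ReflTransGen)
open RNFAwtw (Step)

theorem lastA_accepts : ReflTransGen automaton.Step (.state lastA [a, b]) .accept :=
  .head (Step.readFirst rfl) (.head (Step.readFirst rfl) (.single (.haltAccept (.nil _) rfl)))

theorem check_reaches {q : State} (hq : q ∈ delta eraseB b) (n : ℕ) :
    ReflTransGen automaton.Step (.state check (replicate (n + 2) a ++ replicate (n + 2) b))
      (.state q (replicate (n + 1) a ++ replicate (n + 1) b)) :=
  .head (.goOn (inStar_checkWords (by omega)) rfl rfl) <| .head (Step.readFirst rfl) <|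
    .single (.read (InStar.replicate (S := {[a]}) rfl (n + 1)) hq)

theorem check_accepts (n : ℕ) :
    ReflTransGen automaton.Step (.state check (replicate (n + 2) a ++ replicate (n + 2) b))
      .accept := by
  induction n with
  | zero => exact (check_reaches (Or.inr rfl) 0).trans lastA_accepts
  | succ n ih => exact (check_reaches (Or.inl rfl) (n + 1)).trans ih

theorem lang_automaton : automaton.lang = Llin := by
  refine (backwardInvariant_tapeInvariant.lang_subset ?_).antisymm ?_
  · rintro q (rfl | rfl) w hw <;> exact hw
  · rintro w ⟨_ | _ | n, hn, rfl⟩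
    · omega
    · exact ⟨lastA, Or.inr rfl, lastA_accepts⟩
    · exact ⟨check, Or.inl rfl, check_accepts n⟩

end Llin

/-- The language `L_lin = { a^n b^n : n ≥ 1 }` is accepted by a repetitive
nondeterministic finite automaton with translucent words. -/
theorem Llin_accepted_by_RNFAwtw : AcceptedByRNFAwtw Llin :=
  ⟨Llin.State, inferInstance, Llin.automaton, Llin.lang_automaton⟩
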